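/- If in a 3-page book embedding of a graph G there exist monochromatic paths p1, p2, p3 of colors 1, 2, 3 respectively between two nodes a and b, then for every connected component C of the graph obtained from G by deleting all nodes of p1 ∪ p2 ∪ p3, either every node of C lies strictly between a and b in the linear order, or no node of C does. -/

import Mathlib

open SimpleGraph

/-- Two edges (a,b) and (c,d) conflict in the linear order given by `π`. -/
def Conflict {V : Type*} (π : V → ℝ) (a b c d : V) : Prop :=
  (π a < π c ∧ π c < π b ∧ π b < π d) ∨ (π c < π a ∧ π a < π d ∧ π d < π b)

/-- A valid `k`-page assignment: conflicting edges of `G` get different colors. -/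
def ValidColoring {V : Type*} (G : SimpleGraph V) (π : V → ℝ) (k : ℕ)
    (col : Sym2 V → Fin k) : Prop :=
  ∀ a b c d, G.Adj a b → G.Adj c d → Conflict π a b c d → col s(a, b) ≠ col s(c, d)

/-- `x` lies strictly between `a` and `b` in the linear order `π`. -/
def StrictBtw {V : Type*} (π : V → ℝ) (a b x : V) : Prop :=
  min (π a) (π b) < π x ∧ π x < max (π a) (π b)

/-- `x` lies outside the closed interval `[a,b]`. -/
def OutsideCl {V : Type*} (π : V → ℝ) (a b x : V) : Prop :=
  π x < min (π a) (π b) ∨ max (π a) (π b) < π x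

/-- The edge `(x,y)` exits the interval `(a,b)`. -/
def Exits {V : Type*} (π : V → ℝ) (a b x y : V) : Prop :=
  (StrictBtw π a b x ∧ OutsideCl π a b y) ∨ (StrictBtw π a b y ∧ OutsideCl π a b x)

/-!
Let `xy` be an edge with `x` strictly inside the span of `a` and `b` and `y` outside it. Then
exactly one of `a`, `b` lies strictly between `x` and `y`, so every `a`–`b` path avoiding `x` and
`y` has an edge with one end strictly between `x` and `y` and the other outside their span; that
edge conflicts with `xy`. With paths on all three pages, `xy` has no page left. Hence adjacent
vertices off the paths lie on the same side of `(a, b)`, and so do whole components.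
-/

open Set

namespace SimpleGraph

variable {V : Type*} {G : SimpleGraph V}

theorem Walk.exists_mem_edges_mem_notMem {u v : V} (p : G.Walk u v) (S : Set V)
    (h : u ∈ S ↔ v ∉ S) : ∃ x y, s(x, y) ∈ p.edges ∧ x ∈ S ∧ y ∉ S := by
  by_cases hu : u ∈ S
  · obtain ⟨d, hd, hfst, hsnd⟩ := p.exists_boundary_dart S hu (h.1 hu)
    exact ⟨d.fst, d.snd, List.mem_map_of_mem hd, hfst, hsnd⟩
  · obtain ⟨d, hd, hfst, hsnd⟩ := p.exists_boundary_dart Sᶜ hu fun hv => hu (h.2 hv)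
    refine ⟨d.snd, d.fst, ?_, not_not.1 hsnd, hfst⟩
    rw [Sym2.eq_swap]
    exact List.mem_map_of_mem hd

theorem Reachable.of_forall_adj {P : V → Prop} (hP : ∀ ⦃x y⦄, G.Adj x y → P x → P y)
    {x y : V} (h : G.Reachable x y) (hx : P x) : P y := by
  rw [reachable_iff_reflTransGen] at h
  induction h with
  | refl => exact hx
  | tail _ hyz ih => exact hP hyz ih

theorem ConnectedComponent.forall_or_forall_not {P : V → Prop}
    (hP : ∀ ⦃x y⦄, G.Adj x y → P x → P y) (C : G.ConnectedComponent) :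
    (∀ x, G.connectedComponentMk x = C → P x) ∨
      (∀ x, G.connectedComponentMk x = C → ¬ P x) := by
  induction C using ConnectedComponent.ind with | h v => ?_
  by_cases hv : P v
  · exact .inl fun x hx => (ConnectedComponent.exact hx).symm.of_forall_adj hP hv
  · exact .inr fun x hx hPx => hv ((ConnectedComponent.exact hx).of_forall_adj hP hPx)

end SimpleGraph

section
variable {V : Type*} {π : V → ℝ}

theorem outsideCl_of_not_strictBtw {a b y : V} (ha : π y ≠ π a) (hb : π y ≠ π b)
    (h : ¬ StrictBtw π a b y) : OutsideCl π a b y := by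
  unfold StrictBtw OutsideCl at *
  grind

theorem StrictBtw.mem_uIoo_iff_notMem {a b x y : V} (hx : StrictBtw π a b x)
    (hy : OutsideCl π a b y) : π a ∈ uIoo (π x) (π y) ↔ π b ∉ uIoo (π x) (π y) := by
  simp only [StrictBtw, OutsideCl, uIoo, mem_Ioo] at *
  grind

end

namespace ValidColoring

variable {V : Type*} {G : SimpleGraph V} {π : V → ℝ} {k : ℕ} {col : Sym2 V → Fin k}

theorem col_ne_of_lt_of_lt (hvalid : ValidColoring G π k col) {x y u v : V}
    (hxy : G.Adj x y) (huv : G.Adj u v) (hxu : π x < π u) (huy : π u < π y)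
    (hv : π v < π x ∨ π y < π v) : col s(x, y) ≠ col s(u, v) := by
  rcases hv with hv | hv
  · rw [Sym2.eq_swap (a := u)]
    exact (hvalid v u x y huv.symm hxy (.inl ⟨hv, hxu, huy⟩)).symm
  · exact hvalid x y u v hxy huv (.inl ⟨hxu, huy, hv⟩)

theorem col_ne_of_mem_uIoo (hvalid : ValidColoring G π k col) {x y u v : V}
    (hxy : G.Adj x y) (huv : G.Adj u v) (hu : π u ∈ uIoo (π x) (π y))
    (hv : π v ∉ uIcc (π x) (π y)) : col s(x, y) ≠ col s(u, v) := by
  rcases le_total (π x) (π y) with h | h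
  · rw [uIoo_of_le h] at hu
    rw [uIcc_of_le h, mem_Icc, not_and_or, not_le, not_le] at hv
    exact hvalid.col_ne_of_lt_of_lt hxy huv hu.1 hu.2 hv
  · rw [uIoo_of_ge h] at hu
    rw [uIcc_of_ge h, mem_Icc, not_and_or, not_le, not_le] at hv
    rw [Sym2.eq_swap]
    exact hvalid.col_ne_of_lt_of_lt hxy.symm huv hu.1 hu.2 hv

theorem exists_mem_edges_col_ne (hπ : Function.Injective π) (hvalid : ValidColoring G π k col)
    {a b x y : V} (p : G.Walk a b) (hxy : G.Adj x y) (hxp : x ∉ p.support) (hyp : y ∉ p.support)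
    (hx : StrictBtw π a b x) (hy : OutsideCl π a b y) :
    ∃ e ∈ p.edges, col e ≠ col s(x, y) := by
  obtain ⟨u, v, he, hu, hv⟩ :=
    p.exists_mem_edges_mem_notMem {w | π w ∈ uIoo (π x) (π y)} (hx.mem_uIoo_iff_notMem hy)
  have hvx : π v ≠ π x := fun h => hxp (hπ h ▸ p.snd_mem_support_of_mem_edges he)
  have hvy : π v ≠ π y := fun h => hyp (hπ h ▸ p.snd_mem_support_of_mem_edges he)
  have hv' : π v ∉ uIcc (π x) (π y) := by
    simp only [mem_ofPred_eq, uIoo, mem_Ioo, mem_uIcc] at hv ⊢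
    grind
  exact ⟨_, he, (hvalid.col_ne_of_mem_uIoo hxy (p.adj_of_mem_edges he) hu hv').symm⟩

end ValidColoring

theorem strictBtw_of_adj_of_three_paths {V : Type*} {G : SimpleGraph V} {π : V → ℝ}
    (hπ : Function.Injective π) {col : Sym2 V → Fin 3} (hvalid : ValidColoring G π 3 col)
    {a b : V} (p1 p2 p3 : G.Walk a b) (h1 : ∀ e ∈ p1.edges, col e = 0)
    (h2 : ∀ e ∈ p2.edges, col e = 1) (h3 : ∀ e ∈ p3.edges, col e = 2) {x y : V}
    (hx : x ∉ p1.support ∧ x ∉ p2.support ∧ x ∉ p3.support)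
    (hy : y ∉ p1.support ∧ y ∉ p2.support ∧ y ∉ p3.support)
    (hxy : G.Adj x y) (hxin : StrictBtw π a b x) : StrictBtw π a b y := by
  by_contra hyin
  have hyout : OutsideCl π a b y :=
    outsideCl_of_not_strictBtw (fun h => hy.1 (hπ h ▸ p1.start_mem_support))
      (fun h => hy.1 (hπ h ▸ p1.end_mem_support)) hyin
  have col_ne : ∀ (p : G.Walk a b) (c : Fin 3), (∀ e ∈ p.edges, col e = c) →
      x ∉ p.support → y ∉ p.support → col s(x, y) ≠ c := fun p c hc hxp hyp => by
    obtain ⟨e, he, hne⟩ := hvalid.exists_mem_edges_col_ne hπ p hxy hxp hyp hxin hyout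
    exact hc e he ▸ hne.symm
  have hc0 := col_ne p1 0 h1 hx.1 hy.1
  have hc1 := col_ne p2 1 h2 hx.2.1 hy.2.1
  have hc2 := col_ne p3 2 h3 hx.2.2 hy.2.2
  omega

/-- given monochromatic paths of all three colors between `a` and `b`,
each connected component of `G` minus the path nodes lies entirely strictly inside
the interval `(a,b)` or entirely not strictly inside. -/
theorem stmt2 {V : Type*} (G : SimpleGraph V) (π : V → ℝ)
    (hπ : Function.Injective π) (col : Sym2 V → Fin 3)
    (hvalid : ValidColoring G π 3 col)
    (a b : V) (p1 p2 p3 : G.Walk a b)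
    (h1 : ∀ e ∈ p1.edges, col e = 0)
    (h2 : ∀ e ∈ p2.edges, col e = 1)
    (h3 : ∀ e ∈ p3.edges, col e = 2)
    (S : Set V)
    (hS : S = {v | v ∉ p1.support ∧ v ∉ p2.support ∧ v ∉ p3.support}) :
    ∀ C : (G.induce S).ConnectedComponent,
      (∀ x : S, (G.induce S).connectedComponentMk x = C → StrictBtw π a b (x : V)) ∨
      (∀ x : S, (G.induce S).connectedComponentMk x = C → ¬ StrictBtw π a b (x : V)) := by
  subst hS
  intro C
  refine C.forall_or_forall_not fun x y hxy hx => ?_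
  exact strictBtw_of_adj_of_three_paths hπ hvalid p1 p2 p3 h1 h2 h3 x.2 y.2 hxy hx
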